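/- Let F be a field and N ≥ 1. Let I be the bipartite graph whose vertex classes are the four 3-element subsets of {1,2,3,4} and the four elements of {1,2,3,4}, with an edge between a subset S and an element v if and only if v ∈ S (so I is K_{4,4} minus a perfect matching). Then the (3,4)-hyperclique tensor H^N_{3,4} = Σ_{i,j,k,ℓ=1}^N x_{ijk}·y_{ijℓ}·z_{ikℓ}·w_{jkℓ} is a simple projection of the graph tensor T_{I,N}: H^N_{3,4} ≤_s T_{I,N}. -/

import Mathlib

open Classical Finset MvPolynomial

/-- A multigraph on the ambient vertex type `V`: a finite edge type together with an
assignment of an unordered pair of distinct end-vertices to every edge.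
Parallel edges are allowed. -/
structure Multigraph (V : Type) where
  E : Type
  [decE : DecidableEq E]
  [fintE : Fintype E]
  ends : E → Sym2 V
  loopless : ∀ e, ¬ (ends e).IsDiag

attribute [instance] Multigraph.decE Multigraph.fintE

namespace Multigraph

/-- The set (type) of edges incident with the vertex `v`. -/
def Inc {V : Type} (G : Multigraph V) (v : V) : Type := {e : G.E // v ∈ G.ends e}

noncomputable instance {V : Type} (G : Multigraph V) (v : V) : Fintype (G.Inc v) :=
  Fintype.ofInjective (fun e : G.Inc v => e.1) Subtype.val_injective

noncomputable instance {V : Type} (G : Multigraph V) (v : V) : DecidableEq (G.Inc v) :=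
  Classical.decEq _

end Multigraph

/-- The graph tensor `T_{G,n}`, represented by its array of coefficients:
it is the set-multilinear polynomial with one mode per vertex `v`, whose mode-`v`
variables are indexed by the functions `g : I_G(v) → Fin n`, and which equals
`∑_{f : E(G) → Fin n} ∏_{v} x^{(v)}_{f | I_G(v)}`.  Hence the coefficient of the
set-multilinear monomial `∏_v x^{(v)}_{a v}` is the number of `f : E(G) → Fin n`
whose restriction to `I_G(v)` equals `a v` for every `v`. -/
noncomputable def gTensor (F : Type) [Field F] {V : Type} (G : Multigraph V) (n : ℕ) :
    (∀ v : V, G.Inc v → Fin n) → F :=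
  fun a => ∑ f : G.E → Fin n,
    if ∀ (v : V) (e : G.Inc v), a v e = f e.1 then 1 else 0

/-- Two tensors (given by their coefficient arrays, with modes indexed by `ι` resp. `κ`
and with mode variable sets `X i` resp. `Y j`) are equivalent if one is obtained from the
other by a bijective renaming of variables that is bijective on modes. -/
def TEquiv {F : Type} [Field F] {ι κ : Type} {X : ι → Type} {Y : κ → Type}
    (S : (∀ i, X i) → F) (T : (∀ j, Y j) → F) : Prop :=
  ∃ (σ : ι ≃ κ) (e : ∀ i, X i ≃ Y (σ i)),
    ∀ b : ∀ j, Y j, T b = S fun i => (e i).symm (b (σ i))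

/-- The Kronecker product of two tensors with the same mode index type `ι`:
the `i`-th mode of `S ⊗ T` has variable set `X i × Y i`, and the coefficients multiply. -/
def kron {F : Type} [Field F] {ι : Type} {X Y : ι → Type}
    (S : (∀ i, X i) → F) (T : (∀ i, Y i) → F) : (∀ i, X i × Y i) → F :=
  fun c => S (fun i => (c i).1) * T (fun i => (c i).2)

/-- The `k`-th Kronecker power of a `d`-mode tensor with `n` variables per mode. -/
def kronPow {F : Type} [Field F] {d n : ℕ} (T : (Fin d → Fin n) → F) (k : ℕ) :
    (Fin d → (Fin k → Fin n)) → F :=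
  fun a => ∏ s : Fin k, T fun i => a i s

/-- The rank of a tensor: the least `r` such that `T` is the sum of `r` products of
linear forms, one linear form per mode (a linear form on mode `i` is recorded by its
coefficient vector `X i → F`). -/
noncomputable def tensorRank {F : Type} [Field F] {ι : Type} [Fintype ι] {X : ι → Type}
    (T : (∀ i, X i) → F) : ℕ :=
  sInf {r : ℕ | ∃ ℓ : Fin r → (∀ i, X i → F),
    ∀ a : ∀ i, X i, T a = ∑ s : Fin r, ∏ i, ℓ s i (a i)}

/-- `S` is a restriction of `T` (written `S ≤ T`): there is a bijection `σ` between the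
modes of `T` and the modes of `S` such that `S` is obtained from `T` by substituting for
each variable of mode `j` of `T` a linear form (recorded by its coefficient vector `M j y`)
in the variables of mode `σ j` of `S`. -/
def Restrict {F : Type} [Field F] {ι κ : Type} [Fintype κ] [DecidableEq κ]
    {X : ι → Type} {Y : κ → Type} [∀ j, Fintype (Y j)]
    (S : (∀ i, X i) → F) (T : (∀ j, Y j) → F) : Prop :=
  ∃ (σ : κ ≃ ι) (M : ∀ j, Y j → X (σ j) → F),
    ∀ a : ∀ i, X i, S a = ∑ b : ∀ j, Y j, T b * ∏ j, M j (b j) (a (σ j))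

/-- The tensor, viewed as an honest (set-multilinear) polynomial in the variables
`Σ i, X i`. -/
noncomputable def toPoly {F : Type} [Field F] {ι : Type} [Fintype ι] [DecidableEq ι]
    {X : ι → Type} [∀ i, Fintype (X i)] (T : (∀ i, X i) → F) :
    MvPolynomial (Σ i, X i) F :=
  ∑ a : ∀ i, X i, MvPolynomial.C (T a) * ∏ i, MvPolynomial.X (⟨i, a i⟩ : Σ i, X i)

/-- `S` is a simple projection of `T` (written `S ≤ₛ T`): `S` is obtained from `T` by a
substitution assigning to each variable of `T` either a scalar or a variable of `S`, in
such a way that the image of the variable set of each mode of `T` meets the variable set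
of at most one mode of `S`. -/
def SimpleProj {F : Type} [Field F] {ι κ : Type} [Fintype ι] [DecidableEq ι]
    [Fintype κ] [DecidableEq κ] {X : ι → Type} {Y : κ → Type}
    [∀ i, Fintype (X i)] [∀ j, Fintype (Y j)]
    (S : (∀ i, X i) → F) (T : (∀ j, Y j) → F) : Prop :=
  ∃ s : (Σ j, Y j) → F ⊕ (Σ i, X i),
    (∀ (j : κ) (y y' : Y j) (p p' : Σ i, X i),
        s ⟨j, y⟩ = Sum.inr p → s ⟨j, y'⟩ = Sum.inr p' → p.1 = p'.1) ∧
    toPoly S = MvPolynomial.aeval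
      (fun q => Sum.elim (fun c => (MvPolynomial.C c : MvPolynomial (Σ i, X i) F))
        (fun p => MvPolynomial.X p) (s q)) (toPoly T)

/-- The bipartite incidence graph `I = I_{3,4}` of the `(3,4)`-hyperclique: one vertex
class consists of the four 3-element subsets of `{1,2,3,4}`, the other of the four
elements of `{1,2,3,4}`, with an edge between a subset `S` and an element `v` iff
`v ∈ S` (this is `K_{4,4}` minus a perfect matching). -/
def hcIncidence : Multigraph ({S : Finset (Fin 4) // S.card = 3} ⊕ Fin 4) where
  E := {p : {S : Finset (Fin 4) // S.card = 3} × Fin 4 // p.2 ∈ p.1.1}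
  ends := fun p => s(Sum.inl p.1.1, Sum.inr p.1.2)
  loopless := fun p h => by simpa using Sym2.mk_isDiag_iff.mp h

/-- The `(3,4)`-hyperclique tensor
`H^N_{3,4} = Σ_{i,j,k,ℓ=1}^N x_{ijk}·y_{ijℓ}·z_{ikℓ}·w_{jkℓ}`, given by its coefficient
array: the four modes are indexed by `Fin 4`, each with variable set `Fin N × Fin N × Fin N`
(`a 0` plays the role of the index of the `x`-variable, etc.). -/
noncomputable def hcTensor (F : Type) [Field F] (N : ℕ) :
    (Fin 4 → Fin N × Fin N × Fin N) → F :=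
  fun a => ∑ i : Fin N, ∑ j : Fin N, ∑ k : Fin N, ∑ l : Fin N,
    if a 0 = (i, j, k) ∧ a 1 = (i, j, l) ∧ a 2 = (i, k, l) ∧ a 3 = (j, k, l)
    then 1 else 0

/-!
Label each element of `{1,2,3,4}` rather than each edge of `I`.  Substitute, for a variable of
a subset vertex `S`, the hyperclique variable of the mode of `S` indexed by the labels of the
three edges at `S`; and, for a variable of an element vertex `v`, the scalar `1` if it is a
constant labelling of the edges at `v` and `0` otherwise.  A monomial of `T_{I,N}`, i.e. an edge
labelling `f`, survives exactly when `f` is constant around every element `v`, that is, when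
`f` is induced by a labelling `c` of the four elements, and it then becomes the monomial
`x_{c₁c₂c₃} y_{c₁c₂c₄} z_{c₁c₃c₄} w_{c₂c₃c₄}` of `H^N_{3,4}`.
-/

section toPoly

variable {F : Type} [Field F] {ι : Type} [Fintype ι] [DecidableEq ι] {α : ι → Type}
  [∀ i, Fintype (α i)]

theorem toPoly_sum {β : Type} (s : Finset β) (T : β → (∀ i, α i) → F) :
    toPoly (fun a => ∑ c ∈ s, T c a) = ∑ c ∈ s, toPoly (T c) := by
  simp only [toPoly, map_sum, Finset.sum_mul]
  exact Finset.sum_comm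

theorem toPoly_indicator [DecidableEq (∀ i, α i)] (b : ∀ i, α i) :
    toPoly (fun a => if a = b then (1 : F) else 0) = ∏ i, MvPolynomial.X ⟨i, b i⟩ := by
  simp [toPoly, apply_ite C]

theorem toPoly_sum_indicator {β : Type} [DecidableEq (∀ i, α i)] (s : Finset β)
    (b : β → ∀ i, α i) :
    toPoly (fun a => ∑ c ∈ s, if a = b c then (1 : F) else 0) =
      ∑ c ∈ s, ∏ i, MvPolynomial.X ⟨i, b c i⟩ := by
  simp only [toPoly_sum, toPoly_indicator]

end toPoly

theorem gTensor_eq_sum_indicator (F : Type) [Field F] {V : Type} (G : Multigraph V) (n : ℕ) :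
    gTensor F G n = fun a => ∑ f : G.E → Fin n, if a = fun _ e => f e.1 then 1 else 0 := by
  funext a
  simp only [gTensor, funext_iff]

theorem toPoly_gTensor (F : Type) [Field F] {V : Type} [Fintype V] [DecidableEq V]
    (G : Multigraph V) (n : ℕ) :
    toPoly (gTensor F G n) =
      ∑ f : G.E → Fin n, ∏ v, MvPolynomial.X ⟨v, fun e : G.Inc v => f e.1⟩ := by
  rw [gTensor_eq_sum_indicator]
  convert toPoly_sum_indicator Finset.univ fun (f : G.E → Fin n) v (e : G.Inc v) => f e.1

theorem sum_fun_fin_four {β M : Type} [Fintype β] [AddCommMonoid M] (g : (Fin 4 → β) → M) :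
    ∑ c, g c = ∑ i, ∑ j, ∑ k, ∑ l, g ![i, j, k, l] := by
  simp only [← (Fin.consEquiv _).sum_comp, Fintype.sum_prod_type, Fintype.sum_unique]
  rfl

namespace hcIncidence

abbrev Face : Type := {S : Finset (Fin 4) // S.card = 3}

/-- Mode `m` of `H^N_{3,4}` belongs to the 3-subset of `{0,1,2,3}` omitting `m.rev`, listed
increasingly by `face m`: mode `0` (`x_{ijk}`) is `{0,1,2}`, mode `3` (`w_{jkℓ}`) is `{1,2,3}`. -/
def face (m : Fin 4) : Fin 3 → Fin 4 := m.rev.succAbove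

noncomputable def faceEquiv : Fin 4 ≃ Face :=
  Equiv.ofBijective (fun m => ⟨Finset.univ.erase m.rev, by simp⟩) (by decide)

theorem face_mem (S : Face) (i : Fin 3) : face (faceEquiv.symm S) i ∈ S.1 := by
  obtain ⟨m, rfl⟩ := faceEquiv.surjective S
  simp [faceEquiv, face, Fin.succAbove_ne]

def tripleOf {β : Type} (h : Fin 3 → β) : β × β × β := (h 0, h 1, h 2)

def hcIndex {N : ℕ} (c : Fin 4 → Fin N) (m : Fin 4) : Fin N × Fin N × Fin N :=
  tripleOf (c ∘ face m)

theorem hcTensor_eq_sum_indicator (F : Type) [Field F] (N : ℕ) :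
    hcTensor F N = fun a => ∑ c : Fin 4 → Fin N, if a = hcIndex c then 1 else 0 := by
  funext a
  rw [sum_fun_fin_four]
  refine Fintype.sum_congr _ _ fun i => Fintype.sum_congr _ _ fun j =>
    Fintype.sum_congr _ _ fun k => Fintype.sum_congr _ _ fun l => if_congr ?_ rfl rfl
  constructor
  · rintro ⟨h0, h1, h2, h3⟩
    funext m
    fin_cases m <;> assumption
  · rintro rfl
    exact ⟨rfl, rfl, rfl, rfl⟩

theorem toPoly_hcTensor (F : Type) [Field F] (N : ℕ) :
    toPoly (hcTensor F N) = ∑ c : Fin 4 → Fin N, ∏ m, MvPolynomial.X ⟨m, hcIndex c m⟩ := by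
  rw [hcTensor_eq_sum_indicator, toPoly_sum_indicator]

theorem mem_ends_inl (e : hcIncidence.E) : Sum.inl e.1.1 ∈ hcIncidence.ends e := by
  simp [hcIncidence]

theorem mem_ends_inr (e : hcIncidence.E) : Sum.inr e.1.2 ∈ hcIncidence.ends e := by
  simp [hcIncidence]

theorem snd_eq_of_inc_inr {v : Fin 4} (e : hcIncidence.Inc (Sum.inr v)) : e.1.1.2 = v := by
  simpa [hcIncidence, eq_comm] using e.2

noncomputable def cornerEdge (S : Face) (i : Fin 3) : hcIncidence.Inc (Sum.inl S) :=
  ⟨⟨(S, face (faceEquiv.symm S) i), face_mem S i⟩, mem_ends_inl _⟩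

noncomputable def substitution (F : Type) [Field F] (N : ℕ) :
    (Σ v, hcIncidence.Inc v → Fin N) → F ⊕ (Σ _ : Fin 4, Fin N × Fin N × Fin N)
  | ⟨Sum.inl S, g⟩ => Sum.inr ⟨faceEquiv.symm S, tripleOf (g ∘ cornerEdge S)⟩
  | ⟨Sum.inr _, g⟩ => Sum.inl (if ∃ x, ∀ e, g e = x then 1 else 0)

noncomputable def substPoly (F : Type) [Field F] (N : ℕ)
    (q : Σ v, hcIncidence.Inc v → Fin N) : MvPolynomial (Σ _ : Fin 4, Fin N × Fin N × Fin N) F :=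
  Sum.elim (fun c => MvPolynomial.C c) (fun p => MvPolynomial.X p) (substitution F N q)

theorem substitution_mode_eq (F : Type) [Field F] (N : ℕ) {v : Face ⊕ Fin 4}
    {g g' : hcIncidence.Inc v → Fin N} {p p' : Σ _ : Fin 4, Fin N × Fin N × Fin N}
    (h : substitution F N ⟨v, g⟩ = Sum.inr p) (h' : substitution F N ⟨v, g'⟩ = Sum.inr p') :
    p.1 = p'.1 := by
  rcases v with S | v
  · cases h
    cases h'
    rfl
  · cases h

def liftLabel {N : ℕ} (c : Fin 4 → Fin N) : hcIncidence.E → Fin N := fun e => c e.1.2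

theorem liftLabel_injective (N : ℕ) : Function.Injective (liftLabel (N := N)) := by
  intro c c' h
  funext v
  obtain ⟨S, hS⟩ : ∃ S : Face, v ∈ S.1 := by revert v; decide
  exact congrFun h ⟨(S, v), hS⟩

theorem exists_liftLabel_eq_iff {N : ℕ} (f : hcIncidence.E → Fin N) :
    (∃ c, liftLabel c = f) ↔ ∀ v : Fin 4, ∃ x, ∀ e : hcIncidence.Inc (Sum.inr v), f e.1 = x := by
  constructor
  · rintro ⟨c, rfl⟩ v
    exact ⟨c v, fun e => congrArg c (snd_eq_of_inc_inr e)⟩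
  · intro hf
    choose c hc using hf
    exact ⟨c, funext fun e => (hc e.1.2 ⟨e, mem_ends_inr e⟩).symm⟩

theorem aeval_substPoly_monomial (F : Type) [Field F] {N : ℕ} (f : hcIncidence.E → Fin N) :
    MvPolynomial.aeval (R := F) (substPoly F N)
        (∏ v, MvPolynomial.X ⟨v, fun e : hcIncidence.Inc v => f e.1⟩) =
      (∏ S : Face, MvPolynomial.X ⟨faceEquiv.symm S, tripleOf fun i => f (cornerEdge S i).1⟩) *
        ∏ v : Fin 4, MvPolynomial.C
          (if ∃ x, ∀ e : hcIncidence.Inc (Sum.inr v), f e.1 = x then 1 else 0) := by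
  rw [Fintype.prod_sum_type, map_mul, map_prod, map_prod]
  simp only [MvPolynomial.aeval_X]
  rfl

theorem aeval_substPoly_monomial_liftLabel (F : Type) [Field F] {N : ℕ} (c : Fin 4 → Fin N) :
    MvPolynomial.aeval (R := F) (substPoly F N)
        (∏ v, MvPolynomial.X ⟨v, fun e : hcIncidence.Inc v => liftLabel c e.1⟩) =
      ∏ m, MvPolynomial.X ⟨m, hcIndex c m⟩ := by
  have hconst := (exists_liftLabel_eq_iff (liftLabel c)).mp ⟨c, rfl⟩
  simp only [aeval_substPoly_monomial, hconst, ↓reduceIte, map_one, Finset.prod_const_one,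
    mul_one]
  exact Fintype.prod_equiv faceEquiv.symm _ _ fun S => rfl

theorem aeval_substPoly_monomial_eq_zero (F : Type) [Field F] {N : ℕ}
    {f : hcIncidence.E → Fin N} (hf : ¬∃ c, liftLabel c = f) :
    MvPolynomial.aeval (R := F) (substPoly F N)
        (∏ v, MvPolynomial.X ⟨v, fun e : hcIncidence.Inc v => f e.1⟩) = 0 := by
  obtain ⟨v, hv⟩ := not_forall.mp (mt (exists_liftLabel_eq_iff f).mpr hf)
  rw [aeval_substPoly_monomial]
  exact mul_eq_zero_of_right _
    (Finset.prod_eq_zero (Finset.mem_univ v) (by rw [if_neg hv, map_zero]))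

theorem aeval_substPoly_toPoly_gTensor (F : Type) [Field F] (N : ℕ) :
    MvPolynomial.aeval (substPoly F N) (toPoly (gTensor F hcIncidence N)) =
      toPoly (hcTensor F N) := by
  rw [toPoly_gTensor, map_sum, toPoly_hcTensor]
  symm
  refine Fintype.sum_of_injective liftLabel (liftLabel_injective N) _ _
    (fun f hf => ?_) fun c => ?_
  · exact aeval_substPoly_monomial_eq_zero F (by simpa using hf)
  · rw [aeval_substPoly_monomial_liftLabel]

end hcIncidence

theorem hcTensor_simpleProj_incidence_general (F : Type) [Field F] (N : ℕ) :
    SimpleProj (hcTensor F N) (gTensor F hcIncidence N) :=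
  ⟨hcIncidence.substitution F N,
    fun _ _ _ _ _ => hcIncidence.substitution_mode_eq F N,
    (hcIncidence.aeval_substPoly_toPoly_gTensor F N).symm⟩

/-- For every `N ≥ 1`, the `(3,4)`-hyperclique tensor is a simple
projection of the graph tensor of the incidence graph: `H^N_{3,4} ≤ₛ T_{I,N}`. -/
theorem hcTensor_simpleProj_incidence (F : Type) [Field F] (N : ℕ) (hN : 1 ≤ N) :
    SimpleProj (hcTensor F N) (gTensor F hcIncidence N) :=
  hcTensor_simpleProj_incidence_general F N
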